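/- Let Q be a shortest path system from u to u' in a graph G, and let v be a proper articulation vertex of Q (v lies on every path of Q and v ∉ {u,u'}). Then v is a cut vertex of the union graph G(Q) = ⋃_{Q∈Q} Q: removing v disconnects u from u' in G(Q). -/

import Mathlib

open SimpleGraph

variable {V : Type}

/-- A *shortest path system* (sps) from `u` to `u'` in `G`. -/
def IsSPS (G : SimpleGraph V) (u u' : V) (Q : Set (G.Walk u u')) : Prop :=
  Q.Nonempty ∧
    (∀ p ∈ Q, p.IsPath ∧ p.length = G.dist u u') ∧
    ∀ p : G.Walk u u', p.IsPath → p.length = G.dist u u' →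
      (∀ e ∈ p.edges, ∃ q ∈ Q, e ∈ q.edges) → p ∈ Q

/-- The union graph `G(𝒬) = ⋃_{Q ∈ 𝒬} Q`. -/
def spsGraph (G : SimpleGraph V) {u u' : V} (Q : Set (G.Walk u u')) : SimpleGraph V where
  Adj a b := ∃ p ∈ Q, s(a, b) ∈ p.edges
  symm := by
    constructor
    intro a b h
    obtain ⟨p, hp, he⟩ := h
    exact ⟨p, hp, by rwa [Sym2.eq_swap] at he⟩
  loopless := by
    constructor
    intro a h
    obtain ⟨p, hp, he⟩ := h
    have h2 := p.edges_subset_edgeSet he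
    rw [SimpleGraph.mem_edgeSet] at h2
    exact G.irrefl h2

private lemma my_getVert_mem_support {G : SimpleGraph V} {a b : V} (w : G.Walk a b) (i : ℕ) :
    w.getVert i ∈ w.support := by
  by_cases hi : i ≤ w.length
  · exact SimpleGraph.Walk.mem_support_iff_exists_getVert.mpr ⟨i, rfl, hi⟩
  · rw [w.getVert_of_length_le (by omega)]
    exact SimpleGraph.Walk.end_mem_support w

private lemma my_dist_triangle {G : SimpleGraph V} {a b c : V} (h1 : G.Reachable a b)
    (h2 : G.Reachable b c) : G.dist a c ≤ G.dist a b + G.dist b c := by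
  obtain ⟨p, hp⟩ := h1.exists_walk_length_eq_dist
  obtain ⟨q, hq⟩ := h2.exists_walk_length_eq_dist
  have := SimpleGraph.dist_le (p.append q)
  rwa [SimpleGraph.Walk.length_append, hp, hq] at this

private lemma dist_succ_of_adj {G : SimpleGraph V} {u a b : V} (hr : G.Reachable u a)
    (hab : G.Adj a b) : G.dist u b ≤ G.dist u a + 1 := by
  obtain ⟨q, hq⟩ := hr.exists_walk_length_eq_dist
  have := SimpleGraph.dist_le (q.concat hab)
  rwa [SimpleGraph.Walk.length_concat, hq] at this

private lemma dist_getVert_le {G : SimpleGraph V} {a b : V} (w : G.Walk a b) (i : ℕ) :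
    G.dist a (w.getVert i) ≤ i := by
  classical
  induction w generalizing i with
  | nil => simp [SimpleGraph.Walk.getVert, SimpleGraph.dist_self]
  | @cons x y z h p ih =>
    cases i with
    | zero => simp
    | succ n =>
      rw [SimpleGraph.Walk.getVert_cons_succ]
      calc G.dist x (p.getVert n) ≤ G.dist x y + G.dist y (p.getVert n) := by
            refine my_dist_triangle ?_ ?_
            · exact h.reachable
            · exact SimpleGraph.Walk.reachable (p.takeUntil _ (my_getVert_mem_support p n))
        _ ≤ 1 + n := by
            gcongr
            · exact (SimpleGraph.dist_le (SimpleGraph.Walk.cons h SimpleGraph.Walk.nil)).trans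
                (by simp)
            · exact ih n
        _ = n + 1 := by omega

/-- On a shortest `u`-`u'` path, the `i`-th vertex is at distance exactly `i` from `u`. -/
private lemma dist_getVert_eq {G : SimpleGraph V} {u u' : V} (p : G.Walk u u')
    (hlen : p.length = G.dist u u') {i : ℕ} (hi : i ≤ p.length) :
    G.dist u (p.getVert i) = i := by
  classical
  have h1 : G.dist u (p.getVert i) ≤ i := dist_getVert_le p i
  have h2 : G.dist (p.getVert i) u' ≤ p.length - i := by
    have := dist_getVert_le p.reverse (p.length - i)
    rw [SimpleGraph.Walk.getVert_reverse] at this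
    have hii : p.length - (p.length - i) = i := by omega
    rw [hii] at this
    exact (SimpleGraph.dist_comm ..).le.trans this
  have h3 : G.dist u u' ≤ G.dist u (p.getVert i) + G.dist (p.getVert i) u' := by
    refine my_dist_triangle ?_ ?_
    · exact SimpleGraph.Walk.reachable (p.takeUntil _ (my_getVert_mem_support p i))
    · exact SimpleGraph.Walk.reachable (p.dropUntil _ (my_getVert_mem_support p i))
  omega

/-- a proper articulation vertex `v` of an sps `Q` from `u` to `u'` is a cut
vertex of the union graph `G(𝒬)` separating `u` from `u'`: every `u`-`u'` walk of `G(𝒬)`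
passes through `v` (so removing `v` disconnects `u` from `u'` in `G(𝒬)`). -/
theorem articulation_is_cut_vertex [Fintype V] (G : SimpleGraph V) (u u' : V)
    (Q : Set (G.Walk u u')) (hQ : IsSPS G u u' Q) (v : V)
    (hvu : v ≠ u) (hvu' : v ≠ u') (hart : ∀ p ∈ Q, v ∈ p.support) :
    ∀ w : (spsGraph G Q).Walk u u', v ∈ w.support := by
  classical
  obtain ⟨⟨p0, hp0⟩, hQ2, _⟩ := hQ
  obtain ⟨hp0path, hp0len⟩ := hQ2 p0 hp0
  intro w
  -- the position of `v` on `p0`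
  obtain ⟨k, hk, hkle⟩ := SimpleGraph.Walk.mem_support_iff_exists_getVert.mp (hart p0 hp0)
  have hdistv : G.dist u v = k := by rw [← hk]; exact dist_getVert_eq p0 hp0len hkle
  have hk0 : k ≠ 0 := by
    intro h
    exact hvu (by rw [← hk, h, SimpleGraph.Walk.getVert_zero])
  -- every vertex of the system at distance `k` from `u` is `v`
  have huniq : ∀ p ∈ Q, ∀ x ∈ p.support, G.dist u x = k → x = v := by
    intro p hp x hx hdx
    obtain ⟨hppath, hplen⟩ := hQ2 p hp
    obtain ⟨n, hn, hnle⟩ := SimpleGraph.Walk.mem_support_iff_exists_getVert.mp hx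
    have hdn : G.dist u x = n := by rw [← hn]; exact dist_getVert_eq p hplen hnle
    obtain ⟨m, hm, hmle⟩ := SimpleGraph.Walk.mem_support_iff_exists_getVert.mp (hart p hp)
    have hdm : G.dist u v = m := by rw [← hm]; exact dist_getVert_eq p hplen hmle
    have hnm : n = m := by omega
    rw [← hn, hnm, hm]
  -- edges of the walk are edges of G
  have hGadj : ∀ i, i < w.length → G.Adj (w.getVert i) (w.getVert (i + 1)) := by
    intro i hi
    obtain ⟨p, hp, he⟩ := w.adj_getVert_succ hi
    exact p.edges_subset_edgeSet he
  have hreach : ∀ i, G.Reachable u (w.getVert i) := by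
    intro i
    induction i with
    | zero => rw [SimpleGraph.Walk.getVert_zero]
    | succ n ih =>
      by_cases h : n < w.length
      · exact ih.trans (hGadj n h).reachable
      · rw [w.getVert_of_length_le (by omega)]
        rw [w.getVert_of_length_le (by omega)] at ih
        exact ih
  have hstep : ∀ i, i < w.length → G.dist u (w.getVert (i + 1)) ≤ G.dist u (w.getVert i) + 1 :=
    fun i hi => dist_succ_of_adj (hreach i) (hGadj i hi)
  -- find the first index where the distance from `u` reaches `k`
  have hex : ∃ i, k ≤ G.dist u (w.getVert i) := by
    refine ⟨w.length, ?_⟩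
    rw [SimpleGraph.Walk.getVert_length]
    omega
  set i := Nat.find hex with hidef
  have hPi : k ≤ G.dist u (w.getVert i) := Nat.find_spec hex
  have hile : i ≤ w.length := by
    apply Nat.find_le
    rw [SimpleGraph.Walk.getVert_length]
    omega
  have hi0 : i ≠ 0 := by
    intro h
    rw [h, SimpleGraph.Walk.getVert_zero, SimpleGraph.dist_self] at hPi
    omega
  have hprev : G.dist u (w.getVert (i - 1)) < k := by
    have := Nat.find_min hex (show i - 1 < i by omega)
    omega
  have hstep' := hstep (i - 1) (by omega)
  have hi1 : i - 1 + 1 = i := by omega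
  rw [hi1] at hstep'
  have heq : G.dist u (w.getVert i) = k := by omega
  obtain ⟨p, hp, he⟩ := w.adj_getVert_succ (show i - 1 < w.length by omega)
  rw [hi1] at he
  have hmem : w.getVert i ∈ p.support := p.snd_mem_support_of_mem_edges he
  have hveq := huniq p hp _ hmem heq
  rw [← hveq]
  exact my_getVert_mem_support w i
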